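/- arXiv:2102.08705 — 2 statements merged into one kernel-verified Lean document; each statement's English description precedes it below -/
import Mathlib

section
/- Let Σ be a finite alphabet and p : Σ → Σ* a com-injective word substitution. For a word w = a₁…aₙ ∈ Σ*, write bar(w) := ∏ᵢ x̄_{aᵢ} ∈ ℚ[{x̄_a}_{a∈Σ}], and for a ∈ Σ and w ∈ Σ* let c(a, w) ∈ ℚ[{x̄_a}_{a∈Σ}] be defined recursively by c(a, ε) = 0 and c(a, b·w) = (if a = b then bar(w) else 0) + c(a, w) (so c(a,w) = Σ_{i : wᵢ = a} ∏_{j > i} x̄_{w_j}). Then the Σ×Σ matrix C over ℚ[{x̄_a}_{a∈Σ}] with entries C(a,b) = c(a, p(b)) has nonzero determinant. -/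
open MvPolynomial

/-- bar(w) = ∏ᵢ x̄_{wᵢ}, the monomial of the word w. -/
noncomputable def barEnc {A : Type*} (w : List A) : MvPolynomial A ℚ :=
  (w.map fun a => (X a : MvPolynomial A ℚ)).prod

/-- c(a, w) = Σ_{i : wᵢ = a} ∏_{j > i} x̄_{w_j}, defined recursively. -/
noncomputable def cEnc {A : Type*} [DecidableEq A] (a : A) : List A → MvPolynomial A ℚ
  | [] => 0
  | b :: w => (if a = b then barEnc w else 0) + cEnc a w


lemma nat_inj {A : Type*} [Fintype A] [DecidableEq A] (p : A → List A)
    (hp : Function.Injective (fun m : Multiset A => m.bind fun a => (↑(p a) : Multiset A)))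
    (n m : A → ℕ)
    (h : ∀ x, ∑ b, (p b).count x * n b = ∑ b, (p b).count x * m b) : n = m := by
  have key : ∀ (n : A → ℕ) (x : A),
      Multiset.count x ((∑ a, n a • ({a} : Multiset A)).bind fun a => (↑(p a) : Multiset A))
        = ∑ b, (p b).count x * n b := by
    intro n x
    rw [Multiset.count_bind]
    have : ∀ (s : Multiset A), (Multiset.map (fun b => Multiset.count x (↑(p b) : Multiset A)) s).sum
        = ∑ b, (p b).count x * Multiset.count b s := by
      intro s
      induction s using Multiset.induction with
      | empty => simp
      | cons a s ih =>
        simp only [Multiset.coe_count] at ih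
        simp [ih, Multiset.count_cons, mul_add, Finset.sum_add_distrib, Finset.sum_ite_eq', add_comm]
    rw [this]
    congr 1; ext b
    simp [Multiset.count_sum', Multiset.count_singleton]
  have hm : (∑ a, n a • ({a} : Multiset A)) = ∑ a, m a • ({a} : Multiset A) := by
    apply hp
    ext x
    simp only [key, h]
  funext a
  have := congrArg (Multiset.count a) hm
  simpa [Multiset.count_sum', Multiset.count_singleton] using this


lemma rat_det {A : Type*} [Fintype A] [DecidableEq A] (p : A → List A)
    (hp : Function.Injective (fun m : Multiset A => m.bind fun a => (↑(p a) : Multiset A))) :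
    (Matrix.of fun a b : A => ((p b).count a : ℚ)).det ≠ 0 := by
  intro hdet
  obtain ⟨v, hv, h0⟩ := Matrix.exists_mulVec_eq_zero_iff.mpr hdet
  set d : ℕ := ∏ a, (v a).den with hd
  have hden : ∀ a, (v a).den ∣ d := fun a => Finset.dvd_prod_of_mem _ (Finset.mem_univ a)
  have hdpos : 0 < d := Finset.prod_pos (fun a _ => (v a).pos)
  set w : A → ℤ := fun a => (v a).num * ((d / (v a).den : ℕ) : ℤ) with hw
  have hwv : ∀ a, (w a : ℚ) = (d : ℚ) * v a := by
    intro a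
    have hden0 : ((v a).den : ℚ) ≠ 0 := Nat.cast_ne_zero.mpr (v a).den_nz
    rw [hw]
    rw [Int.cast_mul, Int.cast_natCast, Nat.cast_div (hden a) hden0]
    calc ((v a).num : ℚ) * (((d:ℚ)) / ((v a).den : ℚ)) = (d:ℚ) * (((v a).num : ℚ) / ((v a).den : ℚ)) := by ring
      _ = (d:ℚ) * v a := by rw [Rat.num_div_den]
  have hrow : ∀ x : A, ∑ b, ((p b).count x : ℤ) * w b = 0 := by
    intro x
    have h1 : ∑ b, ((p b).count x : ℚ) * v b = 0 := by
      have := congrFun h0 x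
      simpa [Matrix.mulVec, dotProduct] using this
    have h2 : ((∑ b, ((p b).count x : ℤ) * w b : ℤ) : ℚ) = 0 := by
      push_cast
      calc ∑ b, ((p b).count x : ℚ) * (w b : ℚ)
          = (d : ℚ) * ∑ b, ((p b).count x : ℚ) * v b := by
            rw [Finset.mul_sum]; congr 1; ext b; rw [hwv b]; ring
        _ = 0 := by rw [h1, mul_zero]
    exact_mod_cast h2
  have hpm : (fun a => (w a).toNat) = (fun a => (-(w a)).toNat) := by
    apply nat_inj p hp
    intro x
    have : ((∑ b, (p b).count x * (w b).toNat : ℕ) : ℤ)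
        = ((∑ b, (p b).count x * (-(w b)).toNat : ℕ) : ℤ) := by
      push_cast
      have e : ∀ b, ((w b).toNat : ℤ) = w b + ((-(w b)).toNat : ℤ) := by
        intro b; omega
      calc ∑ b, ((p b).count x : ℤ) * ((w b).toNat : ℤ)
          = ∑ b, ((p b).count x : ℤ) * w b
            + ∑ b, ((p b).count x : ℤ) * ((-(w b)).toNat : ℤ) := by
            rw [← Finset.sum_add_distrib]; congr 1; ext b; rw [e b]; ring
        _ = ∑ b, ((p b).count x : ℤ) * ((-(w b)).toNat : ℤ) := by rw [hrow x, zero_add]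
    exact_mod_cast this
  have hw0 : ∀ a, w a = 0 := by
    intro a
    have := congrFun hpm a
    omega
  apply hv
  funext a
  have := hwv a
  rw [hw0 a] at this
  have : (d : ℚ) * v a = 0 := by simpa using this.symm
  have hd0 : (d : ℚ) ≠ 0 := Nat.cast_ne_zero.mpr hdpos.ne'
  simpa [hd0] using this


lemma aeval_barEnc {A : Type*} (w : List A) :
    aeval (fun _ => (1:ℚ)) (barEnc w) = 1 := by
  induction w with
  | nil => simp [barEnc]
  | cons a w ih =>
    simp only [barEnc, List.map_cons, List.prod_cons, map_mul] at *
    simp [ih]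

lemma aeval_cEnc {A : Type*} [DecidableEq A] (a : A) (w : List A) :
    aeval (fun _ => (1:ℚ)) (cEnc a w) = (w.count a : ℚ) := by
  induction w with
  | nil => simp [cEnc]
  | cons b w ih =>
    simp only [cEnc, map_add, ih, aeval_barEnc, List.count_cons,
      apply_ite (aeval fun _ => (1:ℚ)), map_zero]
    by_cases h : a = b
    · simp [h, eq_comm]; ring
    · simp [h, Ne.symm h]

/-- for a com-injective substitution p over a finite alphabet,
the matrix C(a,b) = c(a, p(b)) over ℚ[{x̄_a}] has nonzero determinant. -/
theorem stmt_7 {A : Type*} [Fintype A] [DecidableEq A] (p : A → List A)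
    (hp : Function.Injective (fun m : Multiset A => m.bind fun a => (↑(p a) : Multiset A))) :
    (Matrix.of fun a b : A => cEnc a (p b)).det ≠ 0 := by
  intro hdet
  apply rat_det p hp
  have h := congrArg (aeval (fun _ => (1:ℚ))) hdet
  rw [map_zero] at h
  rw [← h]
  have := RingHom.map_det ((aeval (fun _ => (1:ℚ)) : MvPolynomial A ℚ →ₐ[ℚ] ℚ).toRingHom)
    (Matrix.of fun a b : A => cEnc a (p b))
  rw [show (aeval (fun _ => (1:ℚ))) (Matrix.of fun a b : A => cEnc a (p b)).det
      = ((aeval (fun _ => (1:ℚ)) : MvPolynomial A ℚ →ₐ[ℚ] ℚ).toRingHom)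
        (Matrix.of fun a b : A => cEnc a (p b)).det from rfl, this]
  congr 1
  ext a b
  exact (aeval_cEnc a (p b)).symm
end

section
/- Let Σ be an alphabet and let Γ = Σ ∪ {#} with # ∉ Σ. For a ∈ Σ define the substitution subst_a : Γ* → Γ* replacing every occurrence of # by #·a (and leaving letters of Σ unchanged). Define the step function on pairs of Γ-words by step'_a(R, S) = ( subst_a(R)·#·a·S, a·S ). Then for every word w = a₁…aₙ ∈ Σ*, folding step' over w from left to right starting from (ε, ε) yields the pair ( (#·rev(w))^{|w|}, rev(w) ), where rev is word reversal. In particular this register transducer with substitution also computes the squared reverse function sqrev : w ↦ (#·rev(w))^{|w|}. -/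
/-- The alphabet Γ = Σ ∪ {#} is modelled as `Option A`, with `none` playing the
role of # and `some a` the role of a letter a ∈ Σ.
`substHash a` replaces every occurrence of # by #·a, leaving letters of Σ
unchanged. -/
def substHash {A : Type*} (a : A) (R : List (Option A)) : List (Option A) :=
  R.flatMap fun c =>
    match c with
    | none => [none, some a]
    | some b => [some b]

/-- step'_a(R, S) = ( subst_a(R)·#·a·S, a·S ). -/
def stepSnd {A : Type*} (a : A) (RS : List (Option A) × List (Option A)) :
    List (Option A) × List (Option A) :=
  (substHash a RS.1 ++ none :: some a :: RS.2, some a :: RS.2)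

lemma substHash_append {A : Type*} (a : A) (l₁ l₂ : List (Option A)) :
    substHash a (l₁ ++ l₂) = substHash a l₁ ++ substHash a l₂ := by
  simp [substHash]

lemma substHash_map_some {A : Type*} (a : A) (l : List A) :
    substHash a (l.map some) = l.map some := by
  induction l with
  | nil => rfl
  | cons b t ih => simp [substHash] at ih ⊢; exact ih

lemma substHash_state {A : Type*} (a : A) (n : ℕ) (l : List A) :
    substHash a ((List.replicate n ((none : Option A) :: l.map some)).flatten) =
      (List.replicate n ((none : Option A) :: some a :: l.map some)).flatten := by
  induction n with
  | zero => rfl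
  | succ n ih =>
      simp only [List.replicate_succ, List.flatten_cons, substHash_append, ih]
      congr 1
      have := substHash_map_some a l
      simp [substHash] at this ⊢
      exact this

lemma foldl_state {A : Type*} (w u : List A) :
    w.foldl (fun RS a => stepSnd a RS)
      ((List.replicate u.length ((none : Option A) :: u.reverse.map some)).flatten,
        u.reverse.map some) =
    ((List.replicate (u ++ w).length ((none : Option A) :: (u ++ w).reverse.map some)).flatten,
      (u ++ w).reverse.map some) := by
  induction w generalizing u with
  | nil => simp
  | cons a w ih =>
    have key : stepSnd a
        ((List.replicate u.length ((none : Option A) :: u.reverse.map some)).flatten,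
          u.reverse.map some) =
        ((List.replicate (u ++ [a]).length
            ((none : Option A) :: (u ++ [a]).reverse.map some)).flatten,
          (u ++ [a]).reverse.map some) := by
      simp only [stepSnd, substHash_state]
      simp [List.replicate_add, List.replicate_succ']
    rw [List.foldl_cons, key, ih (u ++ [a])]
    simp

/-- folding step' over w from (ε, ε) yields
( (#·rev(w))^{|w|}, rev(w) ); i.e. this register transducer with substitution
also computes the squared reverse function. -/
theorem stmt_15 {A : Type*} (w : List A) :
    w.foldl (fun RS a => stepSnd a RS) ([], []) =
      ((List.replicate w.length ((none : Option A) :: w.reverse.map some)).flatten,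
        w.reverse.map some) := by
  simpa using foldl_state w []
end
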